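/- Let Ψ: G → K and Δ: K → H be right-resolving graph homomorphisms and Φ = Δ ∘ Ψ. Then the ∼_Ψ classes in V(G) are exactly the intersections of ∼_Φ classes with fibers of ∂Ψ: if I₁ ∼_Ψ I₂ then I₁ ∼_Φ I₂; and conversely if I₁ ∼_Φ I₂ and ∂Ψ(I₁) = ∂Ψ(I₂) then I₁ ∼_Ψ I₂. -/
import Mathlib


/-- A finite directed multigraph. -/
structure FinGraph where
  V : Type
  E : Type
  [fintV : Fintype V]
  [fintE : Fintype E]
  [decV : DecidableEq V]
  [decE : DecidableEq E]
  src : E → V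
  tgt : E → V

attribute [instance] FinGraph.fintV FinGraph.fintE FinGraph.decV FinGraph.decE

/-- A graph homomorphism. -/
structure GHom (G H : FinGraph) where
  eMap : G.E → H.E
  vMap : G.V → H.V
  src_eq : ∀ e, H.src (eMap e) = vMap (G.src e)
  tgt_eq : ∀ e, H.tgt (eMap e) = vMap (G.tgt e)

def GHom.comp {G K H : FinGraph} (Δ : GHom K H) (Ψ : GHom G K) : GHom G H where
  eMap := Δ.eMap ∘ Ψ.eMap
  vMap := Δ.vMap ∘ Ψ.vMap
  src_eq := fun e => by
    simp only [Function.comp_apply, Δ.src_eq, Ψ.src_eq]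
  tgt_eq := fun e => by
    simp only [Function.comp_apply, Δ.tgt_eq, Ψ.tgt_eq]

/-- The restriction of a homomorphism to the outgoing edges of a state. -/
def outMap {G H : FinGraph} (Φ : GHom G H) (I : G.V) :
    {e : G.E // G.src e = I} → {f : H.E // H.src f = Φ.vMap I} :=
  fun e => ⟨Φ.eMap e.1, (Φ.src_eq e.1).trans (congrArg Φ.vMap e.2)⟩

/-- A right-resolver: a surjective homomorphism restricting to a bijection
on the outgoing edges of each state. -/
def IsRR {G H : FinGraph} (Φ : GHom G H) : Prop :=
  Function.Surjective Φ.vMap ∧ ∀ I : G.V, Function.Bijective (outMap Φ I)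

/-- `IsPathFrom H I u`: the edge list `u` is a path in `H` starting at `I`. -/
def IsPathFrom (H : FinGraph) : H.V → List H.E → Prop
  | _, [] => True
  | I, e :: u => H.src e = I ∧ IsPathFrom H (H.tgt e) u

/-- The terminal state of a path starting at `I`. -/
def pathEnd (H : FinGraph) (I : H.V) (u : List H.E) : H.V :=
  u.foldl (fun _ e => H.tgt e) I

/-- One-step transition: `I · a` is the target of the unique edge at `I`
lifting `a` (when `Φ` is right-resolving and `a` starts at the image of `I`). -/
noncomputable def step {G H : FinGraph} (Φ : GHom G H) (I : G.V) (a : H.E) : G.V :=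
  if h : ∃ e : G.E, G.src e = I ∧ Φ.eMap e = a then G.tgt h.choose else I

/-- Transition along a word: `I · u`. -/
noncomputable def transPath {G H : FinGraph} (Φ : GHom G H) (I : G.V) (u : List H.E) : G.V :=
  u.foldl (step Φ) I

/-- The stability relation of a right-resolver. -/
def Stable {G H : FinGraph} (Φ : GHom G H) (I₁ I₂ : G.V) : Prop :=
  Φ.vMap I₁ = Φ.vMap I₂ ∧
  ∀ u : List H.E, IsPathFrom H (Φ.vMap I₁) u →
    ∃ v : List H.E, IsPathFrom H (pathEnd H (Φ.vMap I₁) u) v ∧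
      transPath Φ I₁ (u ++ v) = transPath Φ I₂ (u ++ v)

/-- A right-resolver is synchronizing if each fiber of its state map is a
single stability class. -/
def Synchronizing {G H : FinGraph} (Φ : GHom G H) : Prop :=
  ∀ I₁ I₂ : G.V, Φ.vMap I₁ = Φ.vMap I₂ → Stable Φ I₁ I₂

/-- The fiber of the state map over a state of the codomain. -/
def fiber {G H : FinGraph} (Φ : GHom G H) (I : H.V) : Set G.V := {J | Φ.vMap J = I}

/-- The image `U · u` of a set of states under transition along a word. -/
noncomputable def setTrans {G H : FinGraph} (Φ : GHom G H) (U : Set G.V)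
    (u : List H.E) : Set G.V :=
  (fun J => transPath Φ J u) '' U

/-- A minimal image of a right-resolver. -/
def IsMinImage {G H : FinGraph} (Φ : GHom G H) (U : Set G.V) : Prop :=
  ∃ (I : H.V) (u : List H.E), IsPathFrom H I u ∧ U = setTrans Φ (fiber Φ I) u ∧
    ∀ v : List H.E, IsPathFrom H (pathEnd H I u) v →
      (setTrans Φ U v).ncard = U.ncard

/-- Strong connectedness: a directed path between every ordered pair of states. -/
def StronglyConnected (G : FinGraph) : Prop :=
  ∀ I J : G.V, ∃ u : List G.E, IsPathFrom G I u ∧ pathEnd G I u = J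

section Helpers

variable {G H : FinGraph}

lemma eMap_inj {Φ : GHom G H} (hΦ : IsRR Φ) {I : G.V} {e₁ e₂ : G.E}
    (h₁ : G.src e₁ = I) (h₂ : G.src e₂ = I) (he : Φ.eMap e₁ = Φ.eMap e₂) : e₁ = e₂ := by
  have := (hΦ.2 I).1 (a₁ := ⟨e₁, h₁⟩) (a₂ := ⟨e₂, h₂⟩) (by
    simp only [outMap, Subtype.mk.injEq]; exact he)
  exact congrArg Subtype.val this

lemma step_spec {Φ : GHom G H} (hΦ : IsRR Φ) {I : G.V} {a : H.E}
    (ha : H.src a = Φ.vMap I) :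
    ∃ e, G.src e = I ∧ Φ.eMap e = a ∧ step Φ I a = G.tgt e := by
  obtain ⟨⟨e, he⟩, hee⟩ := (hΦ.2 I).2 ⟨a, ha⟩
  have h : ∃ e, G.src e = I ∧ Φ.eMap e = a :=
    ⟨e, he, congrArg Subtype.val hee⟩
  exact ⟨h.choose, h.choose_spec.1, h.choose_spec.2, by rw [step, dif_pos h]⟩

lemma vMap_step {Φ : GHom G H} (hΦ : IsRR Φ) {I : G.V} {a : H.E}
    (ha : H.src a = Φ.vMap I) : Φ.vMap (step Φ I a) = H.tgt a := by
  obtain ⟨e, _, he, hs⟩ := step_spec hΦ ha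
  rw [hs, ← Φ.tgt_eq, he]

lemma pathEnd_cons (I : H.V) (e : H.E) (u : List H.E) :
    pathEnd H I (e :: u) = pathEnd H (H.tgt e) u := rfl

lemma pathEnd_append (I : H.V) (u v : List H.E) :
    pathEnd H I (u ++ v) = pathEnd H (pathEnd H I u) v := by
  simp [pathEnd, List.foldl_append]

lemma transPath_append (Φ : GHom G H) (I : G.V) (u v : List H.E) :
    transPath Φ I (u ++ v) = transPath Φ (transPath Φ I u) v := by
  simp [transPath, List.foldl_append]

lemma isPathFrom_append {I : H.V} {u v : List H.E}
    (hu : IsPathFrom H I u) (hv : IsPathFrom H (pathEnd H I u) v) :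
    IsPathFrom H I (u ++ v) := by
  induction u generalizing I with
  | nil => exact hv
  | cons e u ih => exact ⟨hu.1, ih hu.2 hv⟩

lemma map_isPath (Δ : GHom G H) {w : List G.E} {J : G.V}
    (hw : IsPathFrom G J w) :
    IsPathFrom H (Δ.vMap J) (w.map Δ.eMap) ∧
      pathEnd H (Δ.vMap J) (w.map Δ.eMap) = Δ.vMap (pathEnd G J w) := by
  induction w generalizing J with
  | nil => exact ⟨trivial, rfl⟩
  | cons e w ih =>
    obtain ⟨h1, h2⟩ := hw
    have ht : H.tgt (Δ.eMap e) = Δ.vMap (G.tgt e) := Δ.tgt_eq e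
    obtain ⟨p1, p2⟩ := ih h2
    refine ⟨⟨by rw [Δ.src_eq, h1], ?_⟩, ?_⟩
    · rw [ht]; exact p1
    · rw [List.map_cons, pathEnd_cons, ht, pathEnd_cons]; exact p2

lemma exists_lift {Δ : GHom G H} (hΔ : IsRR Δ) (J : G.V) {u : List H.E}
    (hu : IsPathFrom H (Δ.vMap J) u) :
    ∃ w : List G.E, IsPathFrom G J w ∧ w.map Δ.eMap = u ∧
      pathEnd H (Δ.vMap J) u = Δ.vMap (pathEnd G J w) := by
  induction u generalizing J with
  | nil => exact ⟨[], trivial, rfl, rfl⟩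
  | cons a u ih =>
    obtain ⟨h1, h2⟩ := hu
    obtain ⟨⟨e, he⟩, hee⟩ := (hΔ.2 J).2 ⟨a, h1⟩
    have hea : Δ.eMap e = a := congrArg Subtype.val hee
    have hta : H.tgt a = Δ.vMap (G.tgt e) := by rw [← hea, Δ.tgt_eq]
    obtain ⟨w, p1, p2, p3⟩ := ih (G.tgt e) (hta ▸ h2)
    exact ⟨e :: w, ⟨he, p1⟩, by rw [List.map_cons, hea, p2],
      by rw [pathEnd_cons, hta, pathEnd_cons]; exact p3⟩

end Helpers

section Comp

variable {G K H : FinGraph}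

lemma isRR_comp {Ψ : GHom G K} {Δ : GHom K H} (hΨ : IsRR Ψ) (hΔ : IsRR Δ) :
    IsRR (Δ.comp Ψ) := by
  constructor
  · intro J
    obtain ⟨J', hJ'⟩ := hΔ.1 J
    obtain ⟨J'', hJ''⟩ := hΨ.1 J'
    exact ⟨J'', by simp [GHom.comp, hJ'', hJ']⟩
  · intro I'
    have heq : outMap (Δ.comp Ψ) I' = (fun p => ⟨Δ.eMap p.1, by
          rw [Δ.src_eq, p.2]; rfl⟩ : {f : K.E // K.src f = Ψ.vMap I'} →
          {f : H.E // H.src f = (Δ.comp Ψ).vMap I'}) ∘ outMap Ψ I' := rfl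
    rw [heq]
    refine Function.Bijective.comp ?_ (hΨ.2 I')
    have hb := hΔ.2 (Ψ.vMap I')
    constructor
    · intro a b hab
      exact Subtype.ext (eMap_inj hΔ a.2 b.2 (congrArg Subtype.val hab))
    · intro f
      obtain ⟨e, he⟩ := hb.2 ⟨f.1, f.2⟩
      exact ⟨e, Subtype.ext (congrArg Subtype.val he)⟩

lemma transPath_comp {Ψ : GHom G K} {Δ : GHom K H} (hΨ : IsRR Ψ) (hΔ : IsRR Δ)
    (I : G.V) {w : List K.E} (hw : IsPathFrom K (Ψ.vMap I) w) :
    transPath (Δ.comp Ψ) I (w.map Δ.eMap) = transPath Ψ I w := by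
  induction w generalizing I with
  | nil => rfl
  | cons e w ih =>
    obtain ⟨h1, h2⟩ := hw
    obtain ⟨g, hg1, hg2, hg3⟩ := step_spec hΨ h1
    have ha : H.src (Δ.eMap e) = (Δ.comp Ψ).vMap I := by
      rw [Δ.src_eq, h1]; rfl
    obtain ⟨g', hg'1, hg'2, hg'3⟩ := step_spec (isRR_comp hΨ hΔ) ha
    have hsrc : K.src (Ψ.eMap g') = Ψ.vMap I := by rw [Ψ.src_eq, hg'1]
    have : Ψ.eMap g' = e := eMap_inj hΔ hsrc h1 hg'2
    have hgg : g' = g := eMap_inj hΨ hg'1 hg1 (this.trans hg2.symm)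
    have hstep : step (Δ.comp Ψ) I (Δ.eMap e) = step Ψ I e := by
      rw [hg3, hg'3, hgg]
    have hvt : Ψ.vMap (step Ψ I e) = K.tgt e := by
      rw [hg3, ← hg2, Ψ.tgt_eq]
    show transPath (Δ.comp Ψ) (step (Δ.comp Ψ) I (Δ.eMap e)) (w.map Δ.eMap)
        = transPath Ψ (step Ψ I e) w
    rw [hstep]
    exact ih _ (hvt ▸ h2)

lemma vMap_transPath {Φ : GHom G H} (hΦ : IsRR Φ) (I : G.V) {u : List H.E}
    (hu : IsPathFrom H (Φ.vMap I) u) :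
    Φ.vMap (transPath Φ I u) = pathEnd H (Φ.vMap I) u := by
  induction u generalizing I with
  | nil => rfl
  | cons a u ih =>
    obtain ⟨h1, h2⟩ := hu
    have hv : Φ.vMap (step Φ I a) = H.tgt a := vMap_step hΦ h1
    show Φ.vMap (transPath Φ (step Φ I a) u) = pathEnd H (H.tgt a) u
    rw [← hv]
    exact ih _ (hv ▸ h2)

end Comp

/-- stability classes for Ψ are intersections of stability classes
for Φ = Δ ∘ Ψ with the ∂Ψ-fibers. -/
theorem stable_comp_fiber {G K H : FinGraph} (Ψ : GHom G K) (Δ : GHom K H)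
    (hΨ : IsRR Ψ) (hΔ : IsRR Δ) (I₁ I₂ : G.V) :
    (Stable Ψ I₁ I₂ → Stable (Δ.comp Ψ) I₁ I₂) ∧
    ((Stable (Δ.comp Ψ) I₁ I₂ ∧ Ψ.vMap I₁ = Ψ.vMap I₂) → Stable Ψ I₁ I₂) := by
  constructor
  · rintro ⟨hv, hs⟩
    have hv' : (Δ.comp Ψ).vMap I₁ = (Δ.comp Ψ).vMap I₂ := by
      show Δ.vMap (Ψ.vMap I₁) = Δ.vMap (Ψ.vMap I₂); rw [hv]
    refine ⟨hv', fun u hu => ?_⟩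
    obtain ⟨w, hw, hwmap, hwend⟩ := exists_lift hΔ (Ψ.vMap I₁) hu
    obtain ⟨v', hv'path, heq⟩ := hs w hw
    have hwv' : IsPathFrom K (Ψ.vMap I₁) (w ++ v') := isPathFrom_append hw hv'path
    refine ⟨v'.map Δ.eMap, ?_, ?_⟩
    · rw [show pathEnd H ((Δ.comp Ψ).vMap I₁) u = Δ.vMap (pathEnd K (Ψ.vMap I₁) w)
        from hwend]
      exact (map_isPath Δ hv'path).1
    · have hmap : u ++ v'.map Δ.eMap = (w ++ v').map Δ.eMap := by
        rw [List.map_append, hwmap]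
      rw [hmap, transPath_comp hΨ hΔ I₁ hwv',
        transPath_comp hΨ hΔ I₂ (hv ▸ hwv'), heq]
  · rintro ⟨⟨hvΦ, hsΦ⟩, hvΨ⟩
    refine ⟨hvΨ, fun w hw => ?_⟩
    obtain ⟨hup, huend⟩ := map_isPath Δ hw
    obtain ⟨v, hvpath, heq⟩ := hsΦ (w.map Δ.eMap) hup
    rw [show (Δ.comp Ψ).vMap I₁ = Δ.vMap (Ψ.vMap I₁) from rfl, huend] at hvpath
    obtain ⟨v', hv'path, hv'map, _⟩ := exists_lift hΔ (pathEnd K (Ψ.vMap I₁) w) hvpath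
    have hwv' : IsPathFrom K (Ψ.vMap I₁) (w ++ v') := isPathFrom_append hw hv'path
    refine ⟨v', hv'path, ?_⟩
    have hmap : (w ++ v').map Δ.eMap = w.map Δ.eMap ++ v := by
      rw [List.map_append, hv'map]
    calc transPath Ψ I₁ (w ++ v')
        = transPath (Δ.comp Ψ) I₁ ((w ++ v').map Δ.eMap) :=
          (transPath_comp hΨ hΔ I₁ hwv').symm
      _ = transPath (Δ.comp Ψ) I₂ ((w ++ v').map Δ.eMap) := by rw [hmap]; exact heq
      _ = transPath Ψ I₂ (w ++ v') := transPath_comp hΨ hΔ I₂ (hvΨ ▸ hwv')
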